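/- Let M be an n×n real matrix with constants c > 0, λ > 0 such that ‖exp(tM)‖ ≤ c·e^{−λt} for all t ≥ 0. Suppose σ : [0, ∞) → ℝⁿ is differentiable with σ′(t) = −Mᵀ·σ(t) for all t ≥ 0 and ∫₀^∞ ‖σ(t)‖² dt < ∞. Then σ(t) = 0 for all t ≥ 0. -/

import Mathlib

/-!
For `s ≥ t` the vector `exp ((s - t) • Mᵀ) *ᵥ σ s` has zero derivative in `s`, hence equals `σ t`.
Since `‖exp (u • Mᵀ)‖ ≤ n * c` for `u ≥ 0`, this gives `‖σ t‖ ≤ n * c * ‖σ s‖` on all of `[t, ∞)`,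
an interval of infinite measure, so square integrability of `σ` forces `σ t = 0`.
-/

open Matrix MeasureTheory Set

attribute [local instance] Matrix.linftyOpNormedAddCommGroup
  Matrix.linftyOpNormedRing Matrix.linftyOpNormedAlgebra Matrix.linftyOpNormedSpace

namespace Matrix

variable {m n α : Type*} [Fintype m] [Fintype n]

theorem linfty_opNNNorm_entry_le [NormedAddCommGroup α] (A : Matrix m n α) (i : m) (j : n) :
    ‖A i j‖₊ ≤ ‖A‖₊ := by
  rw [linfty_opNNNorm_def]
  exact (Finset.single_le_sum (fun _ _ => zero_le) (Finset.mem_univ j)).trans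
    (Finset.le_sup (f := fun i => ∑ j, ‖A i j‖₊) (Finset.mem_univ i))

theorem linfty_opNorm_transpose_le [NormedAddCommGroup α] (A : Matrix m n α) :
    ‖Aᵀ‖ ≤ Fintype.card m * ‖A‖ := by
  suffices ‖Aᵀ‖₊ ≤ Fintype.card m * ‖A‖₊ by exact_mod_cast this
  rw [linfty_opNNNorm_def]
  refine Finset.sup_le fun j _ => ?_
  calc ∑ i, ‖Aᵀ j i‖₊ ≤ ∑ _i : m, ‖A‖₊ :=
        Finset.sum_le_sum fun i _ => linfty_opNNNorm_entry_le A i j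
    _ = Fintype.card m * ‖A‖₊ := by simp

/-- The `L∞` operator-norm topology on matrices is not definitionally the product topology, so
`mulVecBilin` is made continuous for it by hand (the derivative of `exp` lives in this topology). -/
noncomputable def linftyOpMulVecL (𝕜 : Type*) [NontriviallyNormedField 𝕜] :
    Matrix m n 𝕜 →L[𝕜] (n → 𝕜) →L[𝕜] m → 𝕜 :=
  (mulVecBilin 𝕜 𝕜).mkContinuous₂ 1 fun A v => by simpa using linfty_opNorm_mulVec A v

end Matrix

theorem HasDerivWithinAt.matrix_mulVec {𝕜 m n : Type*} [NontriviallyNormedField 𝕜]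
    [Fintype m] [Fintype n] {A : 𝕜 → Matrix m n 𝕜} {v : 𝕜 → n → 𝕜} {A' : Matrix m n 𝕜}
    {v' : n → 𝕜} {s : Set 𝕜} {x : 𝕜}
    (hA : HasDerivWithinAt A A' s x) (hv : HasDerivWithinAt v v' s x) :
    HasDerivWithinAt (fun t => A t *ᵥ v t) (A x *ᵥ v' + A' *ᵥ v x) s x :=
  (linftyOpMulVecL 𝕜).hasDerivWithinAt_of_bilinear hA hv

theorem exp_smul_mulVec_eq_of_hasDerivWithinAt {m : Type*} [Fintype m] [DecidableEq m]
    {A : Matrix m m ℝ} {σ : ℝ → m → ℝ} {t₀ : ℝ}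
    (hσ : ∀ t, t₀ ≤ t → HasDerivWithinAt σ (-(A *ᵥ σ t)) (Ici t₀) t) {t : ℝ} (ht : t₀ ≤ t) :
    NormedSpace.exp ((t - t₀) • A) *ᵥ σ t = σ t₀ := by
  set g : ℝ → m → ℝ := fun s => NormedSpace.exp ((s - t₀) • A) *ᵥ σ s
  have hg : ∀ s, t₀ ≤ s → HasDerivWithinAt g 0 (Ici t₀) s := by
    intro s hs
    have hE : HasDerivAt (fun s => NormedSpace.exp ((s - t₀) • A))
        (A * NormedSpace.exp ((s - t₀) • A)) s :=
      (hasDerivAt_exp_smul_const' A (s - t₀)).comp_sub_const s t₀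
    convert hE.hasDerivWithinAt.matrix_mulVec (hσ s hs) using 1
    rw [mulVec_neg, mulVec_mulVec, ((Commute.refl A).smul_right (s - t₀)).exp_right.eq,
      neg_add_cancel]
  have := constant_of_has_deriv_right_zero (f := g)
    (fun x hx => (hg x hx.1).continuousWithinAt.mono Icc_subset_Ici_self)
    (fun x hx => (hg x hx.1).mono (Ici_subset_Ici.2 hx.1)) t ⟨ht, le_rfl⟩
  simpa [g] using this

theorem eq_zero_of_norm_le_mul_of_setLIntegral_sq_lt_top {α E F : Type*} [MeasurableSpace α]
    [NormedAddCommGroup E] [NormedAddCommGroup F] {μ : Measure α} {S : Set α}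
    (hS : MeasurableSet S) (hμS : μ S = ⊤) {f : α → E} {v : F} {C : ℝ}
    (hle : ∀ s ∈ S, ‖v‖ ≤ C * ‖f s‖)
    (hf : ∫⁻ s in S, ENNReal.ofReal (‖f s‖ ^ 2) ∂μ < ⊤) : v = 0 := by
  have hmono : ENNReal.ofReal (‖v‖ ^ 2) * μ S
      ≤ ENNReal.ofReal (C ^ 2) * ∫⁻ s in S, ENNReal.ofReal (‖f s‖ ^ 2) ∂μ := by
    rw [← setLIntegral_const, ← lintegral_const_mul' _ _ ENNReal.ofReal_ne_top]
    refine setLIntegral_mono' hS fun s hs => ?_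
    rw [← ENNReal.ofReal_mul (sq_nonneg C), ← mul_pow]
    exact ENNReal.ofReal_le_ofReal (pow_le_pow_left₀ (norm_nonneg v) (hle s hs) 2)
  by_contra hv
  have hv_sq : ENNReal.ofReal (‖v‖ ^ 2) ≠ 0 := by simpa [ENNReal.ofReal_eq_zero] using hv
  rw [hμS, ENNReal.mul_top hv_sq] at hmono
  exact (hmono.trans_lt (ENNReal.mul_lt_top ENNReal.ofReal_lt_top hf)).ne rfl

/-- Uniqueness part of Lemma 2(iii) of the paper: with `M` exponentially stable, any
square-integrable solution on `[0, ∞)` of the anti-stable homogeneous equation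
`σ′ = −Mᵀσ` vanishes identically. -/
theorem antistable_l2_solution_zero
    {n : ℕ} (M : Matrix (Fin n) (Fin n) ℝ)
    (c lam : ℝ) (hc : 0 < c) (hlam : 0 < lam)
    (hstab : ∀ t : ℝ, 0 ≤ t →
      ‖NormedSpace.exp (t • M)‖ ≤ c * Real.exp (-lam * t))
    (σ : ℝ → Fin n → ℝ)
    (hσderiv : ∀ t : ℝ, 0 ≤ t →
      HasDerivWithinAt σ (-(Mᵀ *ᵥ σ t)) (Set.Ici (0 : ℝ)) t)
    (hσl2 : ∫⁻ t in Set.Ici (0 : ℝ), ENNReal.ofReal (‖σ t‖ ^ 2) < ⊤) :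
    ∀ t : ℝ, 0 ≤ t → σ t = 0 := by
  have hbound : ∀ u : ℝ, 0 ≤ u → ‖NormedSpace.exp (u • Mᵀ)‖ ≤ n * c := fun u hu => calc
    ‖NormedSpace.exp (u • Mᵀ)‖ = ‖(NormedSpace.exp (u • M))ᵀ‖ := by
      rw [← transpose_smul, exp_transpose]
    _ ≤ n * ‖NormedSpace.exp (u • M)‖ := by
      simpa using linfty_opNorm_transpose_le (NormedSpace.exp (u • M))
    _ ≤ n * c := by
      gcongr
      refine (hstab u hu).trans (mul_le_of_le_one_right hc.le (Real.exp_le_one_iff.2 ?_))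
      nlinarith
  intro t ht
  refine eq_zero_of_norm_le_mul_of_setLIntegral_sq_lt_top measurableSet_Ici Real.volume_Ici
    (C := n * c) (fun s hs => ?_) ((lintegral_mono_set (Ici_subset_Ici.2 ht)).trans_lt hσl2)
  rw [← exp_smul_mulVec_eq_of_hasDerivWithinAt
    (fun u hu => (hσderiv u (ht.trans hu)).mono (Ici_subset_Ici.2 ht)) hs]
  exact (linfty_opNorm_mulVec _ _).trans
    (mul_le_mul_of_nonneg_right (hbound _ (sub_nonneg.2 hs)) (norm_nonneg _))
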